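/- In Cl₅, the element ε = −e₁e₂e₃e₄ satisfies ε² = 1 and reverse(ε) = ε. Moreover, for all real numbers s₀,…,s₁₅, the sedenion-like number S = s₀ + s₁e₀e₁ + s₂e₀e₂ + s₃e₀e₃ + s₄e₁e₂ + s₅e₃e₁ + s₆e₂e₃ + s₇e₀e₁e₂e₃ + s₈e₀e₄ + s₉e₁e₄ + s₁₀e₂e₄ + s₁₁e₃e₄ + s₁₂e₀e₂e₁e₄ + s₁₃e₀e₁e₃e₄ + s₁₄e₀e₃e₂e₄ + s₁₅e₁e₂e₃e₄ decomposes as S = S_r + S_d·ε, where S_r = s₀ + s₁e₀e₁ + s₂e₀e₂ + s₃e₀e₃ + s₄e₁e₂ + s₅e₃e₁ + s₆e₂e₃ + s₇e₀e₁e₂e₃ and S_d = −s₁₅ + s₁₄e₀e₁ + s₁₃e₀e₂ + s₁₂e₀e₃ + s₁₁e₁e₂ + s₁₀e₃e₁ + s₉e₂e₃ + s₈e₀e₁e₂e₃. -/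

import Mathlib

/-! The standard basis vectors are pairwise orthogonal unit vectors for `Q₅`, so the generators
square to `1` and anticommute. Hence every product of generators is `±` a product with increasing
indices, and all three claims become identities between such normal forms: `ε² = 1` and
`reverse ε = ε` because reordering `e₁e₂e₃e₄` to `e₄e₃e₂e₁` takes an even number of swaps, and
each octonion unit times `ε` is, up to the sign recorded in `S_d`, the matching sedenion unit. -/

open CliffordAlgebra

/-- The positive-definite quadratic form `Q₅(v) = v₀² + ⋯ + v₄²` on `ℝ⁵`. -/
noncomputable def Q5 : QuadraticForm ℝ (Fin 5 → ℝ) :=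
  QuadraticMap.weightedSumSquares ℝ (fun _ : Fin 5 => (1 : ℝ))

/-- The generators `e i` of the Clifford algebra `Cl₅ = Cl_{5,0}`. -/
noncomputable def e (i : Fin 5) : CliffordAlgebra Q5 :=
  CliffordAlgebra.ι Q5 (Pi.single i 1)

namespace QuadraticMap

variable {ι R : Type*} [Fintype ι] [DecidableEq ι] [CommSemiring R]

theorem weightedSumSquares_single (w : ι → R) (i : ι) (r : R) :
    weightedSumSquares R w (Pi.single i r) = w i * (r * r) := by
  rw [weightedSumSquares_apply, Finset.sum_eq_single_of_mem i (Finset.mem_univ i)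
    fun k _ hk => by simp [hk], Pi.single_eq_same, smul_eq_mul]

theorem isOrtho_weightedSumSquares_single (w : ι → R) {i j : ι} (hij : i ≠ j) (a b : R) :
    (weightedSumSquares R w).IsOrtho (Pi.single i a) (Pi.single j b) := by
  have hdisjoint : ∀ k, (Pi.single i a : ι → R) k * (Pi.single j b : ι → R) k = 0 := by
    intro k
    by_cases hk : k = i
    · subst hk; simp [hij]
    · simp [hk]
  simp only [isOrtho_def, weightedSumSquares_apply, Pi.add_apply, ← Finset.sum_add_distrib,
    ← smul_add]
  refine Finset.sum_congr rfl fun k _ => ?_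
  rw [add_mul_self_eq, mul_assoc 2, hdisjoint, mul_zero, add_zero]

end QuadraticMap

theorem e_mul_self (i : Fin 5) : e i * e i = 1 := by
  rw [e, ι_sq_scalar, Q5, QuadraticMap.weightedSumSquares_single, mul_one, mul_one, map_one]

theorem reverse_e (i : Fin 5) : reverse (e i) = e i :=
  reverse_ι _

theorem e_mul_e_mul_self (i : Fin 5) (x : CliffordAlgebra Q5) : e i * (e i * x) = x := by
  rw [← mul_assoc, e_mul_self, one_mul]

theorem e_mul_e_comm_of_lt {i j : Fin 5} (hji : j < i) : e i * e j = -(e j * e i) :=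
  ι_mul_ι_comm_of_isOrtho (QuadraticMap.isOrtho_weightedSumSquares_single _ hji.ne' 1 1)

theorem e_mul_e_mul_comm_of_lt {i j : Fin 5} (hji : j < i) (x : CliffordAlgebra Q5) :
    e i * (e j * x) = -(e j * (e i * x)) :=
  ι_mul_ι_mul_of_isOrtho x (QuadraticMap.isOrtho_weightedSumSquares_single _ hji.ne' 1 1)

/-- In `Cl₅`, `ε = −e₁e₂e₃e₄` satisfies `ε² = 1` and `reverse ε = ε`, and every
sedenion-like number `S` decomposes as `S = S_r + S_d·ε` with octonion-like parts
`S_r`, `S_d`. -/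
theorem sedenionLike_dual_decomposition
    (s₀ s₁ s₂ s₃ s₄ s₅ s₆ s₇ s₈ s₉ s₁₀ s₁₁ s₁₂ s₁₃ s₁₄ s₁₅ : ℝ) :
    (-(e 1 * e 2 * e 3 * e 4))^2 = 1 ∧
    reverse (-(e 1 * e 2 * e 3 * e 4)) = -(e 1 * e 2 * e 3 * e 4) ∧
    (s₀ • (1 : CliffordAlgebra Q5) +
      s₁ • (e 0 * e 1) +
      s₂ • (e 0 * e 2) +
      s₃ • (e 0 * e 3) +
      s₄ • (e 1 * e 2) +
      s₅ • (e 3 * e 1) +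
      s₆ • (e 2 * e 3) +
      s₇ • (e 0 * e 1 * e 2 * e 3) +
      s₈ • (e 0 * e 4) +
      s₉ • (e 1 * e 4) +
      s₁₀ • (e 2 * e 4) +
      s₁₁ • (e 3 * e 4) +
      s₁₂ • (e 0 * e 2 * e 1 * e 4) +
      s₁₃ • (e 0 * e 1 * e 3 * e 4) +
      s₁₄ • (e 0 * e 3 * e 2 * e 4) +
      s₁₅ • (e 1 * e 2 * e 3 * e 4)) =
      (s₀ • (1 : CliffordAlgebra Q5) + s₁ • (e 0 * e 1) + s₂ • (e 0 * e 2) +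
      s₃ • (e 0 * e 3) + s₄ • (e 1 * e 2) + s₅ • (e 3 * e 1) + s₆ • (e 2 * e 3) +
      s₇ • (e 0 * e 1 * e 2 * e 3)) +
      ((-s₁₅) • (1 : CliffordAlgebra Q5) + s₁₄ • (e 0 * e 1) + s₁₃ • (e 0 * e 2) +
      s₁₂ • (e 0 * e 3) + s₁₁ • (e 1 * e 2) + s₁₀ • (e 3 * e 1) + s₉ • (e 2 * e 3) +
      s₈ • (e 0 * e 1 * e 2 * e 3)) * (-(e 1 * e 2 * e 3 * e 4)) := by
  -- `decide` discharges `j < i`, so these rewrites bubble-sort the generators of every monomial.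
  refine ⟨?_, ?_, ?_⟩
  · rw [neg_sq, sq]
    simp (disch := decide) only [mul_assoc, e_mul_e_mul_comm_of_lt, e_mul_e_mul_self, e_mul_self,
      mul_neg, neg_neg]
  · simp only [map_neg, reverse.map_mul, reverse_e, mul_assoc]
    simp (disch := decide) only [e_mul_e_mul_comm_of_lt, e_mul_e_comm_of_lt, mul_neg, neg_neg]
  · simp only [add_mul, smul_mul_assoc, one_mul, mul_assoc, mul_neg]
    simp (disch := decide) only [e_mul_e_mul_comm_of_lt, e_mul_e_mul_self, e_mul_e_comm_of_lt,
      mul_neg, neg_neg, smul_neg, neg_smul]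
    module
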